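/- For fixed L > 0, n ≥ 2, and k > 0, the function F(a,b) = ∫_0^a ∫_0^b sinh^{n-1}(k(x+y)) dx dy, maximized over a, b ≥ 0 subject to a + b = L, attains its maximum exactly at a = b = L/2. -/

import Mathlib

open intervalIntegral Set

/-!
Write `G` and `H` for the primitives of `g = sinh (k ·) ^ (n - 1)` and of `G` vanishing at `0`.
Integrating in `y` and then in `x` gives
`∫₀ᵃ ∫₀ᵇ g (x + y) = H (a + b) - H a - H b`.
Since `H'' = g > 0` on `(0, ∞)`, `H` is strictly convex on `[0, ∞)`, so for fixed `a + b` the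
sum `H a + H b` is strictly minimal at `a = b`.
-/

noncomputable def primitive (g : ℝ → ℝ) (t : ℝ) : ℝ := ∫ s in (0 : ℝ)..t, g s

variable {g : ℝ → ℝ}

theorem deriv_primitive (hg : Continuous g) : deriv (primitive g) = g :=
  funext (hg.deriv_integral g 0)

theorem continuous_primitive (hg : Continuous g) : Continuous (primitive g) :=
  continuous_iff_continuousAt.2 fun t =>
    (hg.integral_hasStrictDerivAt 0 t).hasDerivAt.continuousAt

theorem primitive_add_sub (hg : Continuous g) (x v : ℝ) :
    primitive g (x + v) - primitive g x = ∫ y in (0 : ℝ)..v, g (x + y) := by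
  rw [primitive, primitive, integral_interval_sub_left (hg.intervalIntegrable _ _)
    (hg.intervalIntegrable _ _), integral_comp_add_left, add_zero]

theorem integral_integral_comp_add (hg : Continuous g) (u v : ℝ) :
    ∫ x in (0 : ℝ)..u, ∫ y in (0 : ℝ)..v, g (x + y) =
      primitive (primitive g) (u + v) - primitive (primitive g) u -
        primitive (primitive g) v := by
  have hG := continuous_primitive hg
  simp_rw [← primitive_add_sub hg]
  rw [integral_sub (f := fun x => primitive g (x + v))
    ((hG.comp (continuous_add_const v)).intervalIntegrable _ _)
    (hG.intervalIntegrable _ _), integral_comp_add_right (primitive g), zero_add,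
    ← integral_interval_sub_left (hG.intervalIntegrable 0 (u + v)) (hG.intervalIntegrable 0 v)]
  simp only [primitive]
  ring

theorem strictConvexOn_primitive_primitive (hg : Continuous g) (hpos : ∀ t, 0 < t → 0 < g t) :
    StrictConvexOn ℝ (Ici 0) (primitive (primitive g)) := by
  refine strictConvexOn_of_deriv2_pos (convex_Ici 0)
    (continuous_primitive (continuous_primitive hg)).continuousOn fun t ht => ?_
  rw [interior_Ici] at ht
  rw [Function.iterate_succ, Function.iterate_one, Function.comp_apply,
    deriv_primitive (continuous_primitive hg), deriv_primitive hg]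
  exact hpos t ht

theorem integral_integral_comp_add_lt_of_ne (hg : Continuous g) (hpos : ∀ t, 0 < t → 0 < g t)
    {a b : ℝ} (ha : 0 ≤ a) (hb : 0 ≤ b) (hab : a ≠ b) :
    ∫ x in (0 : ℝ)..a, ∫ y in (0 : ℝ)..b, g (x + y) <
      ∫ x in (0 : ℝ)..(a + b) / 2, ∫ y in (0 : ℝ)..(a + b) / 2, g (x + y) := by
  set H := primitive (primitive g)
  have hmid : H ((a + b) / 2) < (H a + H b) / 2 := by
    have := (strictConvexOn_primitive_primitive hg hpos).2 (mem_Ici.2 ha) (mem_Ici.2 hb) hab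
      (by norm_num : (0 : ℝ) < 1 / 2) (by norm_num : (0 : ℝ) < 1 / 2) (by norm_num)
    rw [smul_eq_mul, smul_eq_mul, smul_eq_mul, smul_eq_mul,
      show 1 / 2 * a + 1 / 2 * b = (a + b) / 2 by ring] at this
    linarith
  rw [integral_integral_comp_add hg, integral_integral_comp_add hg, add_halves]
  linarith

theorem stmt3_general (L : ℝ) (n : ℕ) (k : ℝ) (hk : 0 < k) :
    ∀ a b : ℝ, 0 ≤ a → 0 ≤ b → a + b = L → (a, b) ≠ (L / 2, L / 2) →
      (∫ x in (0:ℝ)..a, ∫ y in (0:ℝ)..b, Real.sinh (k * (x + y)) ^ (n - 1)) <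
      ∫ x in (0:ℝ)..(L / 2), ∫ y in (0:ℝ)..(L / 2),
        Real.sinh (k * (x + y)) ^ (n - 1) := by
  intro a b ha hb hab hne
  have hne' : a ≠ b := fun h => hne (by rw [Prod.mk.injEq]; constructor <;> linarith)
  subst hab
  exact integral_integral_comp_add_lt_of_ne (g := fun t => Real.sinh (k * t) ^ (n - 1))
    (by fun_prop) (fun t ht => pow_pos (Real.sinh_pos_iff.2 (mul_pos hk ht)) _) ha hb hne'

theorem stmt3 (L : ℝ) (hL : 0 < L) (n : ℕ) (hn : 2 ≤ n) (k : ℝ) (hk : 0 < k) :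
    ∀ a b : ℝ, 0 ≤ a → 0 ≤ b → a + b = L → (a, b) ≠ (L / 2, L / 2) →
      (∫ x in (0:ℝ)..a, ∫ y in (0:ℝ)..b, Real.sinh (k * (x + y)) ^ (n - 1)) <
      ∫ x in (0:ℝ)..(L / 2), ∫ y in (0:ℝ)..(L / 2),
        Real.sinh (k * (x + y)) ^ (n - 1) :=
  stmt3_general L n k hk
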